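/- Let G be a finite group with cyclic Sylow p-subgroup S. Then for every nontrivial subgroup P of S, the restriction map from Aut_G(S) = N_G(S)/C_G(S) to Aut_G(P) = N_G(P)/C_G(P) induced by restriction of conjugation automorphisms is an isomorphism. -/

import Mathlib

open scoped Pointwise


private lemma aux_sq_dvd (x : ℤ) (e : ℕ) : x ^ 2 ∣ (1 + x) ^ e - 1 - e * x := by
  induction e with
  | zero => simp
  | succ e ih =>
    obtain ⟨s, hs⟩ := ih
    refine ⟨s + e + x * s, ?_⟩
    push_cast
    linear_combination (1 + x) * hs

private lemma aux_pow_dvd (q : ℕ) (c : ℤ) (h : (q : ℤ) ∣ c - 1) (n : ℕ) :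
    (q : ℤ) ^ (n + 1) ∣ c ^ q ^ n - 1 := by
  induction n with
  | zero => simpa using h
  | succ n ih =>
    obtain ⟨t, ht⟩ := ih
    obtain ⟨s, hs⟩ := aux_sq_dvd ((q : ℤ) ^ (n + 1) * t) q
    have hc : c ^ q ^ (n + 1) = (c ^ q ^ n) ^ q := by rw [← pow_mul, pow_succ]
    have hc' : c ^ q ^ n = 1 + (q : ℤ) ^ (n + 1) * t := by linarith
    refine ⟨t + (q : ℤ) ^ n * t ^ 2 * s, ?_⟩
    rw [hc, hc']
    ring_nf
    ring_nf at hs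
    linear_combination hs

private lemma aux_cyclic_card_eq {α : Type*} [Group α] [Finite α] (hc : IsCyclic α)
    {H K : Subgroup α} (h : Nat.card H = Nat.card K) : H = K := by
  classical
  letI : Fintype α := Fintype.ofFinite α
  have hcomm : ∀ a b : α, a * b = b * a := fun a b => by
    letI := hc.commGroup
    exact mul_comm a b
  set d := Nat.card H with hd
  have hd0 : 0 < d := Nat.card_pos
  let T : Subgroup α :=
    { carrier := {x | x ^ d = 1}
      one_mem' := one_pow d
      mul_mem' := by
        intro a b ha hb
        have : Commute a b := hcomm a b
        simp only [Set.mem_setOf_eq] at *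
        rw [this.mul_pow, ha, hb, one_mul]
      inv_mem' := by
        intro a ha
        simp only [Set.mem_setOf_eq] at *
        rw [inv_pow, ha, inv_one] }
  have hTle : ∀ (L : Subgroup α), Nat.card L = d → L ≤ T := by
    intro L hL x hx
    have : (⟨x, hx⟩ : L) ^ d = 1 := by rw [← hL]; exact pow_card_eq_one'
    have := congrArg (Subtype.val) this
    exact (by simpa using this : x ^ d = 1)
  have hcardT : Nat.card T ≤ d := by
    have : Nat.card T = (Finset.univ.filter fun a : α => a ^ d = 1).card := by
      rw [Nat.card_eq_fintype_card, ← Fintype.card_subtype]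
      congr 1
    rw [this]
    exact hc.card_pow_eq_one_le hd0
  have hH : H = T := Subgroup.eq_of_le_of_card_ge (hTle H rfl) (le_trans hcardT (le_of_eq hd.symm))
  have hK : K = T := Subgroup.eq_of_le_of_card_ge (hTle K h.symm)
    (le_trans hcardT (le_of_eq (hd.trans h)))
  rw [hH, hK]

private lemma aux_fix_ppow {p : ℕ} [hp : Fact p.Prime] {α : Type*} [Group α] [Finite α]
    (hc : IsCyclic α) (hpg : IsPGroup p α) (σ : MulAut α) {y : α} (hy : y ≠ 1)
    (hfix : σ y = y) : ∃ k : ℕ, σ ^ p ^ k = 1 := by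
  obtain ⟨n, hn⟩ := hpg.exists_card_eq
  obtain ⟨g, hg⟩ := hc.exists_generator
  have hog : orderOf g = p ^ n := by
    rw [orderOf_eq_card_of_forall_mem_zpowers hg, hn]
  obtain ⟨k, hk⟩ := Subgroup.mem_zpowers_iff.mp (hg (σ g))
  obtain ⟨m, hm⟩ := Subgroup.mem_zpowers_iff.mp (hg y)
  rcases Nat.eq_zero_or_pos n with hn0 | hn1
  · have : Nat.card α = 1 := by rw [hn, hn0, pow_zero]
    haveI : Subsingleton α := Nat.card_eq_one_iff_unique.mp this |>.1
    exact absurd (Subsingleton.elim y 1) hy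
  have hσe : ∀ e : ℕ, (σ ^ e) g = g ^ (k ^ e) := by
    intro e
    induction e with
    | zero => simp
    | succ e ih =>
      rw [pow_succ', MulAut.mul_apply, ih, map_zpow, ← hk, ← zpow_mul, pow_succ', zpow_mul]
  have hdvd : ((p : ℤ) ^ n) ∣ m * (k - 1) := by
    have h1 : σ y = g ^ (k * m) := by
      rw [← hm, map_zpow, ← hk, ← zpow_mul, mul_comm]
    have h2 : g ^ (m * (k - 1)) = 1 := by
      have : g ^ (k * m) = g ^ m := by rw [← h1, hfix, hm]
      rw [mul_sub, mul_one, zpow_sub, mul_comm m k, this]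
      simp
    have := orderOf_dvd_iff_zpow_eq_one.mpr h2
    rw [hog] at this
    exact_mod_cast this
  have hndvd : ¬ ((p : ℤ) ^ n) ∣ m := by
    intro hdm
    apply hy
    rw [← hm]
    exact orderOf_dvd_iff_zpow_eq_one.mp (by rw [hog]; exact_mod_cast hdm)
  have hpZ : Prime (p : ℤ) := Nat.prime_iff_prime_int.mp hp.out
  have hpk1 : (p : ℤ) ∣ k - 1 := by
    by_contra hnd
    exact hndvd (((hpZ.coprime_iff_not_dvd.mpr hnd).pow_left).dvd_of_dvd_mul_right hdvd)
  refine ⟨n - 1, ?_⟩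
  have hkey : ((p : ℤ) ^ n) ∣ k ^ (p ^ (n - 1)) - 1 := by
    have := aux_pow_dvd p k hpk1 (n - 1)
    rwa [Nat.sub_add_cancel hn1] at this
  ext x
  obtain ⟨t, ht⟩ := Subgroup.mem_zpowers_iff.mp (hg x)
  have hstep : (σ ^ p ^ (n - 1)) x = g ^ ((k : ℤ) ^ (p ^ (n - 1)) * t) := by
    rw [← ht, map_zpow, hσe, ← zpow_mul]
  rw [hstep]
  have h4 : g ^ ((k : ℤ) ^ (p ^ (n - 1)) * t - t) = 1 := by
    apply orderOf_dvd_iff_zpow_eq_one.mp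
    rw [hog]
    push_cast
    have : (k : ℤ) ^ p ^ (n - 1) * t - t = (k ^ p ^ (n - 1) - 1) * t := by ring
    rw [this]
    exact dvd_mul_of_dvd_left hkey t
  have hx1 : g ^ ((k : ℤ) ^ (p ^ (n - 1)) * t) = g ^ t := by
    rw [← sub_add_cancel ((k : ℤ) ^ p ^ (n - 1) * t) t, zpow_add, h4, one_mul]
  rw [hx1, ht]
  rfl

private lemma aux_nmh_apply {G : Type*} [Group G] (H : Subgroup G) (n : (Subgroup.normalizer (H : Set G))) (h : H) :
    ((H.normalizerMonoidHom n h : H) : G) = (n : G) * h * (n : G)⁻¹ := rfl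

private lemma aux_normalizer_le {G : Type*} [Group G] [Finite G]
    {S P : Subgroup G} (hS : IsCyclic ↥S) (hPS : P ≤ S) :
    (Subgroup.normalizer (S : Set G)) ≤ (Subgroup.normalizer (P : Set G)) := by
  intro n hn
  set Q : Subgroup G := MulAut.conj n • P with hQdef
  have hmemS : ∀ x : G, x ∈ S ↔ n * x * n⁻¹ ∈ S := fun x => Subgroup.mem_normalizer_iff.mp hn x
  have hQS : Q ≤ S := by
    intro x hx
    have hx' : n⁻¹ * x * n ∈ P := by
      have := Subgroup.mem_pointwise_smul_iff_inv_smul_mem.mp hx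
      simpa [MulAut.smul_def, mul_assoc] using this
    have := (hmemS (n⁻¹ * x * n)).mp (hPS hx')
    have h2 : n * (n⁻¹ * x * n) * n⁻¹ = x := by group
    rwa [h2] at this
  have hcard : Nat.card (Q.subgroupOf S) = Nat.card (P.subgroupOf S) := by
    rw [Nat.card_congr (Subgroup.subgroupOfEquivOfLe hQS).toEquiv,
        Nat.card_congr (Subgroup.subgroupOfEquivOfLe hPS).toEquiv,
        ← Nat.card_congr (Subgroup.equivSMul (MulAut.conj n) P).toEquiv]
  have hQP : Q = P := by
    have h1 := aux_cyclic_card_eq hS hcard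
    have h2 := congrArg (Subgroup.map S.subtype) h1
    rwa [Subgroup.subgroupOf_map_subtype, Subgroup.subgroupOf_map_subtype,
      inf_eq_left.mpr hQS, inf_eq_left.mpr hPS] at h2
  rw [Subgroup.mem_normalizer_iff]
  intro h
  constructor
  · intro hh
    have := Subgroup.smul_mem_pointwise_smul h (MulAut.conj n) P hh
    rw [← hQP, hQdef]
    simpa [MulAut.smul_def] using this
  · intro hh
    rw [← hQP] at hh
    have := Subgroup.mem_pointwise_smul_iff_inv_smul_mem.mp hh
    simpa [MulAut.smul_def, mul_assoc] using this

/-- The automizer `Aut_G(P) ≅ N_G(P)/C_G(P)` of a subgroup `P` of `G`, realized as the range of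
the conjugation homomorphism `N_G(P) →* Aut(P)`. -/
def automizer {G : Type*} [Group G] (P : Subgroup G) : Subgroup (MulAut ↥P) :=
  (Subgroup.normalizerMonoidHom (H := P)).range

/-- for a finite group `G` with cyclic Sylow `p`-subgroup `S` and any nontrivial
subgroup `P ≤ S`, the restriction map `Aut_G(S) → Aut_G(P)` (induced by restricting conjugation
automorphisms) is an isomorphism. -/
theorem stmt1 {G : Type*} [Group G] [Finite G] {p : ℕ} [Fact p.Prime]
    (S : Sylow p G) (hS : IsCyclic ↥(S : Subgroup G))
    (P : Subgroup G) (hPS : P ≤ (S : Subgroup G)) (hP : P ≠ ⊥) :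
    ∃ e : automizer (S : Subgroup G) ≃* automizer P,
      ∀ (σ : automizer (S : Subgroup G)) (x : G) (hxP : x ∈ P) (hxS : x ∈ (S : Subgroup G)),
        (((e σ : MulAut ↥P) ⟨x, hxP⟩ : ↥P) : G)
          = (((σ : MulAut ↥(S : Subgroup G)) ⟨x, hxS⟩ : ↥(S : Subgroup G)) : G) := by
  classical
  set S' : Subgroup G := (S : Subgroup G) with hS'def
  haveI hScomm : IsMulCommutative ↥S' := ⟨⟨fun a b => by letI := hS.commGroup; exact mul_comm a b⟩⟩
  have hcomm : ∀ a b : G, a ∈ S' → b ∈ S' → a * b = b * a := by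
    intro a b ha hb
    letI := hS.commGroup
    exact congrArg Subtype.val (mul_comm (⟨a, ha⟩ : S') ⟨b, hb⟩)
  have hchar : (Subgroup.normalizer (S' : Set G)) ≤ (Subgroup.normalizer (P : Set G)) := aux_normalizer_le hS hPS
  let incl : ↥(Subgroup.normalizer (S' : Set G)) →* ↥(Subgroup.normalizer (P : Set G)) := Subgroup.inclusion hchar
  let φ : ↥(Subgroup.normalizer (S' : Set G)) →* ↥(automizer P) :=
    (P.normalizerMonoidHom.comp incl).codRestrict (automizer P) (fun n => ⟨incl n, rfl⟩)
  have hφ_apply : ∀ (n : ↥(Subgroup.normalizer (S' : Set G))) (x : ↥P),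
      (((φ n : MulAut ↥P) x : ↥P) : G) = (n : G) * x * (n : G)⁻¹ := fun n x => rfl
  let π : ↥(Subgroup.normalizer (S' : Set G)) →* ↥(automizer S') := S'.normalizerMonoidHom.rangeRestrict
  have hπ_apply : ∀ (n : ↥(Subgroup.normalizer (S' : Set G))) (x : ↥S'),
      (((π n : MulAut ↥S') x : ↥S') : G) = (n : G) * x * (n : G)⁻¹ := fun n x => rfl
  have hkerφ : ∀ n ∈ S'.normalizerMonoidHom.ker, φ n = 1 := by
    intro n hnk
    rw [MonoidHom.mem_ker] at hnk
    apply Subtype.ext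
    refine MulEquiv.ext fun x => Subtype.ext ?_
    have h1 := DFunLike.congr_fun hnk (⟨(x : G), hPS x.2⟩ : ↥S')
    have h2 : (n : G) * x * (n : G)⁻¹ = (x : G) := congrArg Subtype.val h1
    exact (hφ_apply n x).trans h2
  let e₀ := QuotientGroup.quotientKerEquivRange S'.normalizerMonoidHom
  let f : ↥(automizer S') →* ↥(automizer P) :=
    (QuotientGroup.lift _ φ hkerφ).comp e₀.symm.toMonoidHom
  have hfπ : ∀ n : ↥(Subgroup.normalizer (S' : Set G)), f (π n) = φ n := by
    intro n
    have h1 : e₀ (QuotientGroup.mk n) = π n := rfl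
    show (QuotientGroup.lift _ φ hkerφ) (e₀.symm (π n)) = φ n
    rw [← h1, e₀.symm_apply_apply]
    rfl
  -- p does not divide the order of the automizer of S
  have hcard : ¬ p ∣ Nat.card ↥(automizer S') := by
    have hidx : Nat.card ↥(automizer S') = S'.normalizerMonoidHom.ker.index := by
      show Nat.card ↥S'.normalizerMonoidHom.range = S'.normalizerMonoidHom.ker.index
      rw [← Nat.card_congr e₀.toEquiv]
      rfl
    have hle : S'.subgroupOf (Subgroup.normalizer (S' : Set G)) ≤ S'.normalizerMonoidHom.ker := by
      rw [Subgroup.normalizerMonoidHom_ker]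
      intro x hx
      rw [Subgroup.mem_subgroupOf] at hx ⊢
      exact Subgroup.le_centralizer S' hx
    intro hdvd
    have hdvd2 : p ∣ (S'.subgroupOf (Subgroup.normalizer (S' : Set G))).index :=
      dvd_trans (hidx ▸ hdvd) (Subgroup.index_dvd_of_le hle)
    have hco : ((S.subtype Subgroup.le_normalizer : Sylow p ↥(Subgroup.normalizer (S' : Set G))) : Subgroup ↥(Subgroup.normalizer (S' : Set G)))
        = S'.subgroupOf (Subgroup.normalizer (S' : Set G)) := rfl
    have := (S.subtype Subgroup.le_normalizer).not_dvd_index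
    rw [hco] at this
    exact this hdvd2
  have hinj : Function.Injective f := by
    rw [injective_iff_map_eq_one]
    intro σ hσ
    obtain ⟨n, hn⟩ := σ.2
    have hπn : π n = σ := Subtype.ext hn
    have hφ1 : φ n = 1 := by rw [← hfπ, hπn, hσ]
    obtain ⟨⟨x, hxP⟩, hne⟩ := Subgroup.ne_bot_iff_exists_ne_one.mp hP
    have hx1 : x ≠ 1 := fun h => hne (Subtype.ext h)
    set y : ↥S' := ⟨x, hPS hxP⟩ with hydef
    have hy : y ≠ 1 := fun h => hx1 (congrArg Subtype.val h)
    have hfix : (σ : MulAut ↥S') y = y := by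
      apply Subtype.ext
      have h2 : (((φ n : MulAut ↥P) ⟨x, hxP⟩ : ↥P) : G) = x := by rw [hφ1]; rfl
      have h3 : (n : G) * x * (n : G)⁻¹ = x := (hφ_apply n ⟨x, hxP⟩).symm.trans h2
      calc (((σ : MulAut ↥S') y : ↥S') : G)
          = (((π n : MulAut ↥S') y : ↥S') : G) := by rw [hπn]
        _ = (n : G) * x * (n : G)⁻¹ := hπ_apply n y
        _ = x := h3
    obtain ⟨k, hk⟩ := aux_fix_ppow hS S.isPGroup' (σ : MulAut ↥S') hy hfix
    have h1 : orderOf σ ∣ p ^ k := by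
      rw [← orderOf_injective (automizer S').subtype Subtype.coe_injective σ]
      exact orderOf_dvd_of_pow_eq_one hk
    have h2 : orderOf σ ∣ Nat.card ↥(automizer S') := orderOf_dvd_natCard σ
    obtain ⟨j, hj, hoj⟩ := (Nat.dvd_prime_pow Fact.out).mp h1
    cases j with
    | zero => exact orderOf_eq_one_iff.mp (by rw [hoj, pow_zero])
    | succ j =>
      exfalso
      exact hcard (dvd_trans (dvd_pow_self p (Nat.succ_ne_zero j)) (hoj ▸ h2))
  have hsurj : Function.Surjective f := by
    intro τ
    obtain ⟨gg, hgg⟩ := τ.2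
    set g : G := (gg : G) with hgdef
    set C : Subgroup G := Subgroup.centralizer (P : Set G) with hCdef
    have hSC : S' ≤ C :=
      le_trans (Subgroup.le_centralizer S') (Subgroup.centralizer_le (fun x hx => hPS hx))
    have hgP : ∀ x ∈ P, g * x * g⁻¹ ∈ P := fun x hx =>
      (Subgroup.mem_normalizer_iff.mp gg.2 x).mp hx
    have hgP' : ∀ x ∈ P, g⁻¹ * x * g ∈ P := by
      intro x hx
      have h2 := (Subgroup.mem_normalizer_iff.mp ((Subgroup.normalizer (P : Set G)).inv_mem gg.2) x).mp hx
      simpa using h2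
    have hTC : ↑(g • S) ≤ C := by
      intro w hw
      rw [Sylow.coe_subgroup_smul] at hw
      have hs : g⁻¹ * w * g ∈ S' := by
        have := Subgroup.mem_pointwise_smul_iff_inv_smul_mem.mp hw
        simpa [MulAut.smul_def, mul_assoc] using this
      rw [hCdef]
      rw [Subgroup.mem_centralizer_iff]
      intro z hz
      have hwP : g⁻¹ * z * g ∈ P := hgP' z hz
      have hcm := hcomm _ _ (hPS hwP) hs
      have h3 := congrArg (fun t => g * t * g⁻¹) hcm
      simp only [mul_assoc] at h3
      simpa [mul_assoc, inv_mul_cancel_left, mul_inv_cancel_left] using h3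
    obtain ⟨c, hc⟩ := MulAction.exists_smul_eq (↥C) ((g • S).subtype hTC) (S.subtype hSC)
    rw [Sylow.smul_subtype] at hc
    have hcS : c • (g • S) = S := Sylow.subtype_injective hc
    have hcS' : ((c : G) * g) • S = S := by rw [mul_smul]; exact hcS
    have hmem : ((c : G) * g) ∈ (Subgroup.normalizer (S' : Set G)) := Sylow.smul_eq_iff_mem_normalizer.mp hcS'
    refine ⟨π ⟨(c : G) * g, hmem⟩, ?_⟩
    rw [hfπ]
    apply Subtype.ext
    rw [← hgg]
    refine MulEquiv.ext fun x => Subtype.ext ?_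
    have h1 : (x : G) ∈ P := x.2
    have h2 : g * x * g⁻¹ ∈ P := hgP _ h1
    have h3 : (g * (x : G) * g⁻¹) * (c : G) = (c : G) * (g * x * g⁻¹) :=
      Subgroup.mem_centralizer_iff.mp c.2 _ h2
    have h4 : (((φ ⟨(c : G) * g, hmem⟩ : MulAut ↥P) x : ↥P) : G)
        = ((c : G) * g) * x * ((c : G) * g)⁻¹ := hφ_apply _ x
    have h5 : ((P.normalizerMonoidHom gg : MulAut ↥P) x : G) = g * x * g⁻¹ := rfl
    rw [h4, h5]
    have h6 : ((c : G) * g) * (x : G) * ((c : G) * g)⁻¹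
        = (c : G) * (g * x * g⁻¹) * (c : G)⁻¹ := by group
    rw [h6, ← h3, mul_inv_cancel_right]
  refine ⟨MulEquiv.ofBijective f ⟨hinj, hsurj⟩, ?_⟩
  intro σ x hxP hxS
  obtain ⟨n, hn⟩ := σ.2
  have hπn : π n = σ := Subtype.ext hn
  have he : (MulEquiv.ofBijective f ⟨hinj, hsurj⟩) σ = φ n := by rw [← hπn]; exact hfπ n
  rw [he, ← hπn]
  exact (hφ_apply n ⟨x, hxP⟩).trans (hπ_apply n ⟨x, hxS⟩).symm
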